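/- Let n ≥ 3 and suppose G_n and G_n' are two S_{n-1,n-1}-free subgraphs of Q_n, each with m edges, such that no vertex v ∈ {0,1}^n has degree n in both G_n and G_n'. Then the subgraph of Q_{n+1} obtained by placing G_n on the vertices {(x,0) : x ∈ {0,1}^n}, placing G_n' on {(x,1) : x ∈ {0,1}^n}, and adding all 2^n edges {(x,0),(x,1)}, is S_{n,n}-free and has 2m + 2^n edges. -/

import Mathlib

open SimpleGraph

/-- The `n`-dimensional hypercube: vertices are `{0,1}^n`, adjacent iff they
differ in exactly one coordinate (Hamming distance 1). -/
def cube (n : ℕ) : SimpleGraph (Fin n → Bool) where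
  Adj x y := hammingDist x y = 1
  symm := ⟨fun x y h => (hammingDist_comm y x).trans h⟩
  loopless := ⟨fun x h => absurd ((hammingDist_self x).symm.trans h) zero_ne_one⟩

/-- The double star `S_{k,l}`: an edge `uv` (here `Sum.inl none` and
`Sum.inr none`) with `k` leaves attached to `u` and `l` further leaves
attached to `v`. -/
def doubleStar (k l : ℕ) : SimpleGraph (Option (Fin k) ⊕ Option (Fin l)) :=
  SimpleGraph.fromRel (fun a b =>
    (a = Sum.inl none ∧ b = Sum.inr none) ∨
    (a = Sum.inl none ∧ ∃ i, b = Sum.inl (some i)) ∨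
    (a = Sum.inr none ∧ ∃ j, b = Sum.inr (some j)))

/-- `G` contains `H` as a (not necessarily induced) subgraph. -/
def Contains {α β : Type*} (G : SimpleGraph α) (H : SimpleGraph β) : Prop :=
  ∃ f : β ↪ α, ∀ a b, H.Adj a b → G.Adj (f a) (f b)

/-- The Turán number of `H` in the hypercube `Q_n`: the maximum number of
edges of an `H`-free subgraph of `Q_n`. -/
noncomputable def exQ (n : ℕ) {β : Type*} (H : SimpleGraph β) : ℕ :=
  sSup {m | ∃ G : SimpleGraph (Fin n → Bool),
    G ≤ cube n ∧ ¬ Contains G H ∧ G.edgeSet.ncard = m}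

/-- Number of coordinates equal to `1` (Hamming weight). -/
def wt {n : ℕ} (x : Fin n → Bool) : ℕ := hammingDist x (fun _ => false)

/-!
Inside a triangle-free graph, a copy of `S_{k,l}` exists exactly when some edge `uv` has
`deg u ≥ k + 1` and `deg v ≥ l + 1`: the neighbourhoods of `u` and `v`, minus the edge itself,
are disjoint. In the glued graph the degree of `(x, b)` is one more than the degree of `x` in its
layer, and degrees in `Q_n` are at most `n`. So an edge of `Q_{n+1}` with both endpoints of
degree `n + 1` is either a layer edge whose endpoints have degree `n` in `G` (or `G'`), giving an
`S_{n-1,n-1}` there, or a matching edge at a vertex of degree `n` in both `G` and `G'`.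
The edge count is the handshake lemma.
-/

section DoubleStar

variable {α : Type*} {G : SimpleGraph α}

lemma le_ncard_neighborSet_of_injective [Finite α] {ι : Type*} {u : α} {g : ι → α}
    (hg : Function.Injective g) (hadj : ∀ i, G.Adj u (g i)) :
    Nat.card ι ≤ (G.neighborSet u).ncard := by
  rw [← Set.ncard_range_of_injective hg]
  exact Set.ncard_le_ncard (Set.range_subset_iff.2 hadj)

lemma doubleStar_adj_center {k l : ℕ} : (doubleStar k l).Adj (.inl none) (.inr none) := by
  simp [doubleStar]

lemma doubleStar_adj_left {k l : ℕ} (i : Fin k) :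
    (doubleStar k l).Adj (.inl none) (.inl (some i)) := by
  simp [doubleStar]

lemma doubleStar_adj_right {k l : ℕ} (j : Fin l) :
    (doubleStar k l).Adj (.inr none) (.inr (some j)) := by
  simp [doubleStar]

theorem Contains.exists_adj_ncard_neighborSet [Finite α] {k l : ℕ}
    (h : Contains G (doubleStar k l)) :
    ∃ u v, G.Adj u v ∧ k + 1 ≤ (G.neighborSet u).ncard ∧
      l + 1 ≤ (G.neighborSet v).ncard := by
  obtain ⟨f, hf⟩ := h
  refine ⟨f (.inl none), f (.inr none), hf _ _ doubleStar_adj_center, ?_, ?_⟩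
  · have := le_ncard_neighborSet_of_injective (G := G) (ι := Option (Fin k))
      (g := fun o => f (o.elim (.inr none) (.inl ∘ some)))
      (f.injective.comp (by rintro (_ | _) (_ | _) <;> simp))
      (by rintro (_ | i)
          exacts [hf _ _ doubleStar_adj_center, hf _ _ (doubleStar_adj_left i)])
    simpa using this
  · have := le_ncard_neighborSet_of_injective (G := G) (ι := Option (Fin l))
      (g := fun o => f (o.elim (.inl none) (.inr ∘ some)))
      (f.injective.comp (by rintro (_ | _) (_ | _) <;> simp))
      (by rintro (_ | j)
          exacts [hf _ _ doubleStar_adj_center.symm, hf _ _ (doubleStar_adj_right j)])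
    simpa using this

lemma exists_embedding_fin_of_le_ncard [Finite α] {s : Set α} {k : ℕ} (hk : k ≤ s.ncard) :
    ∃ e : Fin k ↪ α, ∀ i, e i ∈ s := by
  have : Nonempty (Fin k ↪ s) := by
    have := Fintype.ofFinite s
    rw [Function.Embedding.nonempty_iff_card_le, Fintype.card_fin, ← Nat.card_eq_fintype_card,
      Nat.card_coe_set_eq]
    exact hk
  obtain ⟨e⟩ := this
  exact ⟨e.trans (Function.Embedding.subtype _), fun i => (e i).2⟩

theorem contains_doubleStar_of_adj [Finite α] (hG : G.CliqueFree 3) {u v : α} (huv : G.Adj u v)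
    {k l : ℕ} (hu : k + 1 ≤ (G.neighborSet u).ncard) (hv : l + 1 ≤ (G.neighborSet v).ncard) :
    Contains G (doubleStar k l) := by
  obtain ⟨eu, heu⟩ := exists_embedding_fin_of_le_ncard (k := k) (s := G.neighborSet u \ {v})
    (by rw [Set.ncard_sdiff_singleton_of_mem (s := G.neighborSet u) huv]; omega)
  obtain ⟨ev, hev⟩ := exists_embedding_fin_of_le_ncard (k := l) (s := G.neighborSet v \ {u})
    (by rw [Set.ncard_sdiff_singleton_of_mem (s := G.neighborSet v) huv.symm]; omega)
  have hu : u ∉ Set.range eu := by rintro ⟨i, hi⟩; exact G.irrefl (hi ▸ (heu i).1)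
  have hv : v ∉ Set.range ev := by rintro ⟨j, hj⟩; exact G.irrefl (hj ▸ (hev j).1)
  let fL := eu.optionElim u hu
  let fR := ev.optionElim v hv
  have hLR : ∀ a b, fL a ≠ fR b := by
    rintro (_ | i) (_ | j) h <;> simp only [fL, fR, Function.Embedding.optionElim_apply,
      Option.elim'_none, Option.elim'_some] at h
    · exact huv.ne h
    · exact (hev j).2 h.symm
    · exact (heu i).2 h
    · classical
      exact hG {u, v, eu i} (is3Clique_triple_iff.2 ⟨huv, (heu i).1, h ▸ (hev j).1⟩)
  refine ⟨⟨Sum.elim fL fR, fL.injective.sumElim fR.injective hLR⟩, ?_⟩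
  intro a b hab
  rw [doubleStar, fromRel_adj] at hab
  rcases hab.2 with (⟨rfl, rfl⟩ | ⟨rfl, i, rfl⟩ | ⟨rfl, j, rfl⟩) |
    (⟨rfl, rfl⟩ | ⟨rfl, i, rfl⟩ | ⟨rfl, j, rfl⟩)
  · exact huv
  · exact (heu i).1
  · exact (hev j).1
  · exact huv.symm
  · exact (heu i).1.symm
  · exact (hev j).1.symm

end DoubleStar

theorem sum_ncard_neighborSet {α : Type*} [Fintype α] (G : SimpleGraph α) :
    ∑ v, (G.neighborSet v).ncard = 2 * G.edgeSet.ncard := by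
  classical
  have hdeg : ∀ v, (G.neighborSet v).ncard = G.degree v := fun v => by
    rw [← Set.fintypeCard_eq_ncard, card_neighborSet_eq_degree]
  rw [Finset.sum_congr rfl fun v _ => hdeg v, sum_degrees_eq_twice_card_edges, ← coe_edgeFinset,
    Set.ncard_coe_finset]

section Cube

variable {n : ℕ}

theorem cube_adj_iff {x y : Fin n → Bool} :
    (cube n).Adj x y ↔ ∃ i, y = Function.update x i (!x i) := by
  change hammingDist x y = 1 ↔ _
  rw [hammingDist, Finset.card_eq_one]
  simp only [Finset.ext_iff, Finset.mem_filter, Finset.mem_univ, true_and, Finset.mem_singleton]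
  refine exists_congr fun i => ⟨fun h => funext fun j => ?_, ?_⟩
  · by_cases hj : j = i
    · subst hj; have := (h j).2 rfl; cases hx : x j <;> simp_all
    · simpa [hj, eq_comm] using (h j).not.2 hj
  · rintro rfl j
    by_cases hj : j = i <;> simp [hj]

theorem ncard_neighborSet_le_of_le_cube {G : SimpleGraph (Fin n → Bool)} (hG : G ≤ cube n)
    (x : Fin n → Bool) : (G.neighborSet x).ncard ≤ n := by
  have hsub : G.neighborSet x ⊆ Set.range fun i => Function.update x i (!x i) :=
    fun y hy => by obtain ⟨i, rfl⟩ := cube_adj_iff.1 (hG hy); exact ⟨i, rfl⟩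
  calc (G.neighborSet x).ncard ≤ (Set.range fun i => Function.update x i (!x i)).ncard :=
        Set.ncard_le_ncard hsub
    _ ≤ (Set.univ : Set (Fin n)).ncard := by
        rw [← Set.image_univ]; exact Set.ncard_image_le Set.finite_univ
    _ = n := by simp

theorem cube_cliqueFree_three : (cube n).CliqueFree 3 := by
  classical
  intro s hs
  obtain ⟨x, y, z, hxy, hxz, hyz, -⟩ := is3Clique_iff.1 hs
  obtain ⟨i, rfl⟩ := cube_adj_iff.1 hxy
  obtain ⟨j, rfl⟩ := cube_adj_iff.1 hxz
  obtain ⟨k, hk⟩ := cube_adj_iff.1 hyz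
  have hij : i ≠ j := by rintro rfl; exact hyz.ne rfl
  have hki : k = i := by
    by_contra hki
    have := congrFun hk i
    simp [Function.update_apply, hij, Ne.symm hki] at this
  subst hki
  exact hxz.ne (by rw [hk]; simp)

end Cube

theorem hammingDist_snoc {n : ℕ} {β : Type*} [DecidableEq β] (x y : Fin n → β) (b c : β) :
    hammingDist (Fin.snoc x b : Fin (n + 1) → β) (Fin.snoc y c) =
      hammingDist x y + if b = c then 0 else 1 := by
  simp only [hammingDist, Finset.card_filter]
  rw [Fin.sum_univ_castSucc]
  simp [Fin.snoc_castSucc, Fin.snoc_last]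

theorem sum_univ_fin_succ_bool {n : ℕ} {M : Type*} [AddCommMonoid M]
    (f : (Fin (n + 1) → Bool) → M) :
    ∑ v, f v = ∑ x, f (Fin.snoc x true) + ∑ x, f (Fin.snoc x false) := by
  rw [← (Fin.snocEquiv fun _ => Bool).sum_comp, Fintype.sum_prod_type, Fintype.sum_bool]
  rfl

section Glue

variable {n : ℕ} {G G' : SimpleGraph (Fin n → Bool)}

/-- The vertex `(x, b)` of `Q_n × K_2` is `Fin.snoc x b`; the layer `b = false` carries `G` and
the layer `b = true` carries `G'`, i.e. the layer of `b` is `cond b G' G`. -/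
def glue (G G' : SimpleGraph (Fin n → Bool)) : SimpleGraph (Fin (n + 1) → Bool) :=
  SimpleGraph.fromRel (fun x y =>
      (x (Fin.last n) = false ∧ y (Fin.last n) = false ∧
        G.Adj (fun i => x i.castSucc) (fun i => y i.castSucc)) ∨
      (x (Fin.last n) = true ∧ y (Fin.last n) = true ∧
        G'.Adj (fun i => x i.castSucc) (fun i => y i.castSucc)) ∨
      (∀ i : Fin n, x i.castSucc = y i.castSucc))

theorem glue_adj_snoc {x y : Fin n → Bool} {b c : Bool} :
    (glue G G').Adj (Fin.snoc x b) (Fin.snoc y c) ↔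
      b = c ∧ (cond b G' G).Adj x y ∨ x = y ∧ b ≠ c := by
  have hext : ∀ z w : Fin n → Bool, (∀ i, z i = w i) ↔ z = w := fun _ _ => funext_iff.symm
  simp only [glue, fromRel_adj, Fin.snoc_last, Fin.snoc_castSucc, hext]
  cases b <;> cases c <;> simp [adj_comm G y, adj_comm G' y, eq_comm (a := y)] <;>
    exact ⟨fun h => h.2.resolve_right h.1, fun h => ⟨h.ne, .inl h⟩⟩

theorem glue_le_cube (hG : G ≤ cube n) (hG' : G' ≤ cube n) : glue G G' ≤ cube (n + 1) := by
  intro u v huv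
  induction u using Fin.snocCases with | _ x b =>
  induction v using Fin.snocCases with | _ y c =>
  change hammingDist _ _ = 1
  rw [hammingDist_snoc]
  rcases glue_adj_snoc.1 huv with ⟨rfl, hxy⟩ | ⟨rfl, hbc⟩
  · rw [if_pos rfl]
    cases b
    exacts [hG hxy, hG' hxy]
  · simp [hbc]

theorem neighborSet_glue_snoc (x : Fin n → Bool) (b : Bool) :
    (glue G G').neighborSet (Fin.snoc x b) =
      insert (Fin.snoc x (!b)) ((Fin.snoc · b) '' (cond b G' G).neighborSet x) := by
  ext v
  induction v using Fin.snocCases with | _ y c =>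
  simp only [mem_neighborSet, glue_adj_snoc, Set.mem_insert_iff, Set.mem_image, Fin.snoc_inj]
  cases b <;> cases c <;> simp [eq_comm]

theorem ncard_neighborSet_glue_snoc (x : Fin n → Bool) (b : Bool) :
    ((glue G G').neighborSet (Fin.snoc x b)).ncard = ((cond b G' G).neighborSet x).ncard + 1 := by
  rw [neighborSet_glue_snoc, Set.ncard_insert_of_notMem, Set.ncard_image_of_injective]
  · exact Fin.snoc_left_injective (α := fun _ => Bool) b
  · rintro ⟨y, -, hy⟩
    simpa using congrFun hy (Fin.last n)

theorem ncard_edgeSet_glue :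
    (glue G G').edgeSet.ncard = G.edgeSet.ncard + G'.edgeSet.ncard + 2 ^ n := by
  have h := sum_ncard_neighborSet (glue G G')
  rw [sum_univ_fin_succ_bool] at h
  simp only [ncard_neighborSet_glue_snoc, cond_true, cond_false,
    Finset.sum_add_distrib, sum_ncard_neighborSet, Finset.sum_const, Finset.card_univ,
    smul_eq_mul, mul_one, Fintype.card_fun, Fintype.card_bool, Fintype.card_fin] at h
  omega

theorem not_contains_doubleStar_glue (hG : G ≤ cube n) (hG' : G' ≤ cube n)
    (hfree : ¬ Contains G (doubleStar (n - 1) (n - 1)))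
    (hfree' : ¬ Contains G' (doubleStar (n - 1) (n - 1)))
    (hdeg : ∀ v, ¬ ((G.neighborSet v).ncard = n ∧ (G'.neighborSet v).ncard = n)) :
    ¬ Contains (glue G G') (doubleStar n n) := by
  have hle : ∀ b, cond b G' G ≤ cube n := by rintro (_ | _); exacts [hG, hG']
  intro h
  obtain ⟨u, v, huv, hu, hv⟩ := h.exists_adj_ncard_neighborSet
  induction u using Fin.snocCases with | _ x b =>
  induction v using Fin.snocCases with | _ y c =>
  rw [ncard_neighborSet_glue_snoc] at hu hv
  have hx := ncard_neighborSet_le_of_le_cube (hle b) x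
  rcases glue_adj_snoc.1 huv with ⟨rfl, hxy⟩ | ⟨rfl, hbc⟩
  · have hy := ncard_neighborSet_le_of_le_cube (hle b) y
    have hpos : 0 < ((cond b G' G).neighborSet x).ncard := (Set.ncard_pos).2 ⟨y, hxy⟩
    have hS : Contains (cond b G' G) (doubleStar (n - 1) (n - 1)) :=
      contains_doubleStar_of_adj (cube_cliqueFree_three.anti (hle b)) hxy (by omega) (by omega)
    cases b
    exacts [hfree hS, hfree' hS]
  · have hx' := ncard_neighborSet_le_of_le_cube (hle c) x
    apply hdeg x
    cases b <;> cases c <;>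
      simp only [ne_eq, not_true_eq_false, cond_false, cond_true] at hbc hu hv hx hx' ⊢ <;> omega

end Glue

theorem stmt6_general (n : ℕ) (m : ℕ)
    (G G' : SimpleGraph (Fin n → Bool))
    (hG : G ≤ cube n) (hG' : G' ≤ cube n)
    (hfree : ¬ Contains G (doubleStar (n - 1) (n - 1)))
    (hfree' : ¬ Contains G' (doubleStar (n - 1) (n - 1)))
    (hm : G.edgeSet.ncard = m) (hm' : G'.edgeSet.ncard = m)
    (hdeg : ∀ v, ¬ ((G.neighborSet v).ncard = n ∧ (G'.neighborSet v).ncard = n))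
    (H : SimpleGraph (Fin (n + 1) → Bool))
    (hH : H = SimpleGraph.fromRel (fun x y =>
      (x (Fin.last n) = false ∧ y (Fin.last n) = false ∧
        G.Adj (fun i => x i.castSucc) (fun i => y i.castSucc)) ∨
      (x (Fin.last n) = true ∧ y (Fin.last n) = true ∧
        G'.Adj (fun i => x i.castSucc) (fun i => y i.castSucc)) ∨
      (∀ i : Fin n, x i.castSucc = y i.castSucc))) :
    H ≤ cube (n + 1) ∧ ¬ Contains H (doubleStar n n) ∧
      H.edgeSet.ncard = 2 * m + 2 ^ n := by
  obtain rfl : H = glue G G' := hH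
  refine ⟨glue_le_cube hG hG', not_contains_doubleStar_glue hG hG' hfree hfree' hdeg, ?_⟩
  rw [ncard_edgeSet_glue, hm, hm']
  ring

/-- gluing two `S_{n-1,n-1}`-free subgraphs of `Q_n` with no common
degree-`n` vertex along a perfect matching yields an `S_{n,n}`-free subgraph of
`Q_{n+1}` with `2m + 2^n` edges. -/
theorem stmt6 (n : ℕ) (hn : 3 ≤ n) (m : ℕ)
    (G G' : SimpleGraph (Fin n → Bool))
    (hG : G ≤ cube n) (hG' : G' ≤ cube n)
    (hfree : ¬ Contains G (doubleStar (n - 1) (n - 1)))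
    (hfree' : ¬ Contains G' (doubleStar (n - 1) (n - 1)))
    (hm : G.edgeSet.ncard = m) (hm' : G'.edgeSet.ncard = m)
    (hdeg : ∀ v, ¬ ((G.neighborSet v).ncard = n ∧ (G'.neighborSet v).ncard = n))
    (H : SimpleGraph (Fin (n + 1) → Bool))
    (hH : H = SimpleGraph.fromRel (fun x y =>
      (x (Fin.last n) = false ∧ y (Fin.last n) = false ∧
        G.Adj (fun i => x i.castSucc) (fun i => y i.castSucc)) ∨
      (x (Fin.last n) = true ∧ y (Fin.last n) = true ∧
        G'.Adj (fun i => x i.castSucc) (fun i => y i.castSucc)) ∨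
      (∀ i : Fin n, x i.castSucc = y i.castSucc))) :
    H ≤ cube (n + 1) ∧ ¬ Contains H (doubleStar n n) ∧
      H.edgeSet.ncard = 2 * m + 2 ^ n :=
  stmt6_general n m G G' hG hG' hfree hfree' hm hm' hdeg H hH
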